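/- arXiv:2503.07729 — 2 statements merged into one kernel-verified Lean document; each statement's English description precedes it below -/
import Mathlib

section
/- Let A and Q₁, …, Q_M (M ≥ 1) be Hermitian operators on ℂ^D with Tr(Q_k Q_j) = 0 for all k ≠ j and Tr(Q_k²) > 0 for each k. Let ΔE > 0, W ∈ (0,1), and w₂₀ ∈ (0,1). Let w₊ and w₂₊ be completely positive weights with w̃₊(δE) ≥ W for all |δE| < ΔE and w̃₂₊(δE) ≤ w₂₀ for all |δE| ≥ ΔE. For each k set δQ_k² := |Tr(Q_k²) − ∫_ℝ w₂₊(t) · Tr(Q_k(t) Q_k) dt|, where X(t) := exp(−itH) · X · exp(itH). Then ∫_ℝ w₊(t) · Tr(A(t) A) dt ≥ W · Σ_{k=1}^{M} (max(|Tr(A Q_k)| − √(δQ_k² · Tr(A²) / (1 − w₂₀)), 0))² / Tr(Q_k²). -/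
open MeasureTheory Filter
open scoped ComplexOrder

namespace QET

variable {D : ℕ}

/-- `exp(-itH)` for the Hamiltonian `H = Σ_n (E n) • P_n`, where `P_n` is the orthogonal
projection onto the `n`-th vector of the fixed orthonormal eigenbasis `e`.  All operators are
written as matrices in this eigenbasis, so `H` is diagonal and
`exp(-itH) = diag (exp (-i t E n))`. -/
noncomputable def U (E : Fin D → ℝ) (t : ℝ) : Matrix (Fin D) (Fin D) ℂ :=
  Matrix.diagonal fun n => Complex.exp (-(Complex.I) * t * (E n))

/-- Time evolution `X(t) = exp(-itH) · X · exp(itH)`. -/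
noncomputable def evolve (E : Fin D → ℝ) (t : ℝ) (X : Matrix (Fin D) (Fin D) ℂ) :
    Matrix (Fin D) (Fin D) ℂ :=
  U E t * X * U E (-t)

/-- A state: a positive semidefinite operator with unit trace. -/
def IsState (ρ : Matrix (Fin D) (Fin D) ℂ) : Prop :=
  ρ.PosSemidef ∧ ρ.trace = 1

/-- An observable: an orthogonal projection (Hermitian idempotent). -/
def IsObservable (P : Matrix (Fin D) (Fin D) ℂ) : Prop :=
  P.IsHermitian ∧ P * P = P

/-- Orthogonal projection `Π_S` onto the energy shell spanned by `{e n : n ∈ S}`. -/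
noncomputable def shellProj (S : Finset (Fin D)) : Matrix (Fin D) (Fin D) ℂ :=
  Matrix.diagonal fun n => if n ∈ S then 1 else 0

/-- A state is supported on the shell of `S`: `Π_S ρ Π_S = ρ`. -/
def SupportedOn (S : Finset (Fin D)) (ρ : Matrix (Fin D) (Fin D) ℂ) : Prop :=
  shellProj S * ρ * shellProj S = ρ

/-- Thermal value `⟨P⟩_S = Tr(P Π_S)/d` (a real number: trace of Hermitian products below). -/
noncomputable def thermVal (S : Finset (Fin D)) (P : Matrix (Fin D) (Fin D) ℂ) : ℝ :=
  (P * shellProj S).trace.re / S.card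

/-- Fourier transform `w̃(E) = ∫ w(t) exp(-iEt) dt` of a weight function. -/
noncomputable def fourier (w : ℝ → ℝ) (En : ℝ) : ℂ :=
  ∫ t : ℝ, (w t : ℂ) * Complex.exp (-(Complex.I) * En * t)

/-- A weight function: integrable, nonnegative, normalized to `∫ w = 1`. -/
structure IsWeight (w : ℝ → ℝ) : Prop where
  integrable : Integrable w
  nonneg : ∀ t, 0 ≤ w t
  normalized : (∫ t : ℝ, w t) = 1

/-- A completely positive weight: a weight function whose Fourier transform is a
nonnegative real number everywhere. -/
structure IsCPWeight (w : ℝ → ℝ) extends IsWeight w : Prop where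
  fourier_im : ∀ En : ℝ, (fourier w En).im = 0
  fourier_nonneg : ∀ En : ℝ, 0 ≤ (fourier w En).re

/-- The matrix element `⟨e n, (P - ⟨P⟩_S · 1) e m⟩ = ⟨e n, P e m⟩ - ⟨P⟩_S δ_{nm}`. -/
noncomputable def devEl (S : Finset (Fin D)) (P : Matrix (Fin D) (Fin D) ℂ)
    (n m : Fin D) : ℂ :=
  P n m - if n = m then (thermVal S P : ℂ) else 0

/-- Band variance `Σ_{n,m ∈ S, |E n - E m| < ΔE} |⟨e n, P e m⟩ - ⟨P⟩_S δ_{nm}|²`. -/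
noncomputable def bandVar (S : Finset (Fin D)) (E : Fin D → ℝ) (ΔE : ℝ)
    (P : Matrix (Fin D) (Fin D) ℂ) : ℝ :=
  ∑ n ∈ S, ∑ m ∈ S,
    if |E n - E m| < ΔE then ‖devEl S P n m‖ ^ 2 else 0

/-- Energy-band thermalization in the shell `S` with bandwidth `ΔE` and accuracy `ε`. -/
def EnergyBandTherm (S : Finset (Fin D)) (E : Fin D → ℝ) (ΔE ε : ℝ)
    (P : Matrix (Fin D) (Fin D) ℂ) : Prop :=
  (1 / (S.card : ℝ)) * bandVar S E ΔE P < ε ^ 2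

/-- Expectation value `⟨v, P v⟩` of an operator in a vector. -/
noncomputable def expVal (P : Matrix (Fin D) (Fin D) ℂ) (v : Fin D → ℂ) : ℂ :=
  dotProduct (star v) (P.mulVec v)

/-!
In the energy eigenbasis `Tr(X(t) X) = Σ_{n,m} e^{-i(E_n - E_m)t} |X_{nm}|²`, so the `w`-average
of the autocorrelator weighs `|X_{nm}|²` with `Re w̃(E_n - E_m)`. View matrices as vectors of the
Hilbert–Schmidt space and split them into their band part (`|E_n - E_m| < ΔE`) and the rest.
The `w₊`-average of `Tr(A(t) A)` is at least `W` times the squared norm of the band part of `A`,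
and by Bessel's inequality for the orthogonal charges this dominates
`Σ_k |⟨Q_k, A_band⟩|² / Tr(Q_k²)`. Since `1 - Re w̃₂₊ ≥ 1 - w₂₀` off the band, the off-band part
of `Q_k` has squared norm at most `δQ_k² / (1 - w₂₀)`, and Cauchy–Schwarz on the off-band parts
shows that `|Tr(A Q_k)|` exceeds `|⟨Q_k, A_band⟩|` by at most `√(δQ_k² Tr(A²) / (1 - w₂₀))`.
-/
open scoped InnerProductSpace Matrix

section Bessel

variable {𝕜 E ι : Type*} [RCLike 𝕜] [NormedAddCommGroup E] [InnerProductSpace 𝕜 E]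

theorem orthonormal_normalize_of_pairwise_inner_eq_zero {v : ι → E}
    (hv : Pairwise fun i j => ⟪v i, v j⟫_𝕜 = 0) :
    Orthonormal 𝕜 fun i : {i // v i ≠ 0} => ((‖v i‖⁻¹ : ℝ) : 𝕜) • v i := by
  classical
  rw [orthonormal_iff_ite]
  rintro ⟨i, hi⟩ ⟨j, hj⟩
  simp only [inner_smul_left, inner_smul_right, Subtype.mk.injEq, RCLike.conj_ofReal]
  split_ifs with hij
  · subst hij
    rw [inner_self_eq_norm_sq_to_K, ← RCLike.ofReal_pow, ← RCLike.ofReal_mul, ← RCLike.ofReal_mul]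
    have hvi : ‖v i‖ ≠ 0 := norm_ne_zero_iff.mpr hi
    field_simp
    simp
  · rw [hv hij, mul_zero, mul_zero]

theorem sum_norm_inner_sq_div_norm_sq_le {v : ι → E}
    (hv : Pairwise fun i j => ⟪v i, v j⟫_𝕜 = 0)
    (s : Finset ι) (x : E) :
    ∑ i ∈ s, ‖⟪v i, x⟫_𝕜‖ ^ 2 / ‖v i‖ ^ 2 ≤ ‖x‖ ^ 2 := by
  classical
  calc ∑ i ∈ s, ‖⟪v i, x⟫_𝕜‖ ^ 2 / ‖v i‖ ^ 2
      = ∑ i ∈ s.subtype (v · ≠ 0), ‖⟪((‖v i‖⁻¹ : ℝ) : 𝕜) • v i, x⟫_𝕜‖ ^ 2 := by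
        rw [Finset.sum_subtype_eq_sum_filter
            (f := fun i => ‖⟪((‖v i‖⁻¹ : ℝ) : 𝕜) • v i, x⟫_𝕜‖ ^ 2),
          ← Finset.sum_filter_of_ne (p := (v · ≠ 0)) (fun i _ h hi => h (by simp [hi]))]
        refine Finset.sum_congr rfl fun i _ => ?_
        rw [inner_smul_left, norm_mul, RCLike.conj_ofReal, RCLike.norm_ofReal, abs_inv, abs_norm]
        ring
    _ ≤ ‖x‖ ^ 2 := (orthonormal_normalize_of_pairwise_inner_eq_zero hv).sum_inner_products_le x

end Bessel

section Indicator

variable {𝕜 ι : Type*} [RCLike 𝕜] [Fintype ι]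

noncomputable def indicatorVec (s : Set ι) (x : EuclideanSpace 𝕜 ι) : EuclideanSpace 𝕜 ι :=
  WithLp.toLp 2 (s.indicator x.ofLp)

theorem norm_sq_indicatorVec (s : Set ι) (x : EuclideanSpace 𝕜 ι) :
    ‖indicatorVec s x‖ ^ 2 = ∑ i, s.indicator (fun i => ‖x i‖ ^ 2) i := by
  classical
  rw [EuclideanSpace.norm_sq_eq]
  refine Finset.sum_congr rfl fun i _ => ?_
  by_cases hi : i ∈ s <;> simp [indicatorVec, hi]

theorem inner_eq_inner_indicatorVec_add (s : Set ι) (x y : EuclideanSpace 𝕜 ι) :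
    ⟪y, x⟫_𝕜 = ⟪y, indicatorVec s x⟫_𝕜 + ⟪indicatorVec sᶜ y, indicatorVec sᶜ x⟫_𝕜 := by
  classical
  simp only [PiLp.inner_apply, ← Finset.sum_add_distrib]
  refine Finset.sum_congr rfl fun i _ => ?_
  by_cases hi : i ∈ s <;> simp [indicatorVec, hi]

theorem norm_inner_le_norm_inner_indicatorVec_add (s : Set ι) (x y : EuclideanSpace 𝕜 ι) :
    ‖⟪y, x⟫_𝕜‖ ≤ ‖⟪y, indicatorVec s x⟫_𝕜‖ + ‖indicatorVec sᶜ y‖ * ‖indicatorVec sᶜ x‖ := by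
  rw [inner_eq_inner_indicatorVec_add s]
  exact (norm_add_le _ _).trans (by gcongr; exact norm_inner_le_norm _ _)

theorem norm_indicatorVec_sq_le (s : Set ι) (x : EuclideanSpace 𝕜 ι) :
    ‖indicatorVec s x‖ ^ 2 ≤ ‖x‖ ^ 2 := by
  rw [norm_sq_indicatorVec, EuclideanSpace.norm_sq_eq]
  exact Finset.sum_le_sum fun i _ => Set.indicator_le_self' (fun _ _ => by positivity) i

theorem mul_norm_sq_indicatorVec_le_sum {s : Set ι} {c : ι → ℝ} {W : ℝ}
    (hs : ∀ i ∈ s, W ≤ c i) (hc : ∀ i ∉ s, 0 ≤ c i) (x : EuclideanSpace 𝕜 ι) :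
    W * ‖indicatorVec s x‖ ^ 2 ≤ ∑ i, c i * ‖x i‖ ^ 2 := by
  classical
  rw [norm_sq_indicatorVec, Finset.mul_sum]
  refine Finset.sum_le_sum fun i _ => ?_
  by_cases hi : i ∈ s
  · simpa [hi] using mul_le_mul_of_nonneg_right (hs i hi) (sq_nonneg ‖x i‖)
  · simpa [hi] using mul_nonneg (hc i hi) (sq_nonneg ‖x i‖)

end Indicator

namespace IsWeight

variable {w : ℝ → ℝ}

theorem integrable_mul_cos (hw : IsWeight w) (ω : ℝ) :
    Integrable fun t => w t * Real.cos (ω * t) :=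
  hw.integrable.mul_bdd (by fun_prop) (c := 1) (ae_of_all _ fun t => Real.abs_cos_le_one _)

theorem fourier_re (hw : IsWeight w) (ω : ℝ) :
    (fourier w ω).re = ∫ t, w t * Real.cos (ω * t) := by
  have hint : Integrable fun t => (w t : ℂ) * Complex.exp (-Complex.I * ω * t) :=
    hw.integrable.ofReal.mul_bdd (by fun_prop) (c := 1) (ae_of_all _ fun t => by
      rw [Complex.norm_exp]; simp)
  rw [fourier, ← RCLike.re_to_complex, ← integral_re hint]
  congr 1 with t
  rw [show -Complex.I * ω * t = ((-(ω * t) : ℝ) : ℂ) * Complex.I by push_cast; ring,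
    RCLike.re_to_complex, Complex.re_ofReal_mul, Complex.exp_ofReal_mul_I_re, Real.cos_neg]

theorem fourier_re_le_one (hw : IsWeight w) (ω : ℝ) : (fourier w ω).re ≤ 1 := by
  rw [hw.fourier_re, ← hw.normalized]
  refine integral_mono (hw.integrable_mul_cos ω) hw.integrable fun t => ?_
  simpa using mul_le_mul_of_nonneg_left (Real.cos_le_one (ω * t)) (hw.nonneg t)

end IsWeight

section HilbertSchmidt

variable {𝕜 m n : Type*} [RCLike 𝕜] [Fintype m] [Fintype n]

-- The index order is that of `Matrix.vec`: `hsVec X (j, i) = X i j`.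
noncomputable def hsVec (X : Matrix m n 𝕜) : EuclideanSpace 𝕜 (n × m) :=
  WithLp.toLp 2 X.vec

theorem inner_hsVec (X Y : Matrix m n 𝕜) : ⟪hsVec X, hsVec Y⟫_𝕜 = (Xᴴ * Y).trace := by
  rw [hsVec, hsVec, EuclideanSpace.inner_toLp_toLp, dotProduct_comm,
    Matrix.star_vec_dotProduct_vec]

theorem norm_sq_hsVec (X : Matrix m n 𝕜) : ‖hsVec X‖ ^ 2 = RCLike.re (Xᴴ * X).trace := by
  rw [← inner_hsVec, inner_self_eq_norm_sq]

end HilbertSchmidt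

theorem norm_sq_hsVec_of_isHermitian {n : Type*} [Fintype n] {X : Matrix n n ℂ}
    (hX : X.IsHermitian) : ‖hsVec X‖ ^ 2 = (X * X).trace.re := by
  rw [norm_sq_hsVec, hX.eq, RCLike.re_to_complex]

theorem evolve_apply (E : Fin D → ℝ) (t : ℝ) (X : Matrix (Fin D) (Fin D) ℂ) (i j : Fin D) :
    evolve E t X i j = Complex.exp ((-((E i - E j) * t) : ℝ) * Complex.I) * X i j := by
  simp only [evolve, U, Matrix.mul_diagonal, Matrix.diagonal_mul]
  rw [mul_right_comm, ← Complex.exp_add]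
  push_cast
  ring_nf

theorem trace_evolve_mul_self_re (E : Fin D → ℝ) (t : ℝ) {X : Matrix (Fin D) (Fin D) ℂ}
    (hX : X.IsHermitian) :
    (evolve E t X * X).trace.re = ∑ p, Real.cos ((E p.2 - E p.1) * t) * ‖hsVec X p‖ ^ 2 := by
  rw [Matrix.trace_mul_comm]
  nth_rewrite 1 [← hX.eq]
  rw [← inner_hsVec, PiLp.inner_apply, Complex.re_sum]
  refine Finset.sum_congr rfl fun p _ => ?_
  simp only [hsVec, PiLp.toLp_apply, Matrix.vec, evolve_apply, RCLike.inner_apply]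
  rw [mul_assoc, Complex.mul_conj, Complex.normSq_eq_norm_sq, Complex.re_mul_ofReal,
    Complex.exp_ofReal_mul_I_re, Real.cos_neg]

theorem integral_mul_trace_evolve_mul_self {w : ℝ → ℝ} (hw : IsWeight w) (E : Fin D → ℝ)
    {X : Matrix (Fin D) (Fin D) ℂ} (hX : X.IsHermitian) :
    ∫ t, w t * (evolve E t X * X).trace.re
      = ∑ p, (fourier w (E p.2 - E p.1)).re * ‖hsVec X p‖ ^ 2 := by
  simp_rw [trace_evolve_mul_self_re E _ hX, Finset.mul_sum, ← mul_assoc]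
  rw [integral_finsetSum _ fun p _ => (hw.integrable_mul_cos _).mul_const _]
  simp_rw [integral_mul_const, hw.fourier_re]

def band (E : Fin D → ℝ) (ΔE : ℝ) : Set (Fin D × Fin D) :=
  {p | |E p.2 - E p.1| < ΔE}

theorem mul_norm_sq_band_le_integral {w : ℝ → ℝ} (hw : IsCPWeight w) {E : Fin D → ℝ}
    {ΔE W : ℝ} (hband : ∀ δE : ℝ, |δE| < ΔE → W ≤ (fourier w δE).re)
    {X : Matrix (Fin D) (Fin D) ℂ} (hX : X.IsHermitian) :
    W * ‖indicatorVec (band E ΔE) (hsVec X)‖ ^ 2 ≤ ∫ t, w t * (evolve E t X * X).trace.re := by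
  rw [integral_mul_trace_evolve_mul_self hw.toIsWeight E hX]
  exact mul_norm_sq_indicatorVec_le_sum (fun p hp => hband _ hp)
    (fun p _ => hw.fourier_nonneg _) _

theorem one_sub_mul_norm_sq_offBand_le {w : ℝ → ℝ} (hw : IsWeight w) {E : Fin D → ℝ}
    {ΔE w₀ : ℝ} (hband : ∀ δE : ℝ, ΔE ≤ |δE| → (fourier w δE).re ≤ w₀)
    {X : Matrix (Fin D) (Fin D) ℂ} (hX : X.IsHermitian) :
    (1 - w₀) * ‖indicatorVec (band E ΔE)ᶜ (hsVec X)‖ ^ 2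
      ≤ |(X * X).trace.re - ∫ t, w t * (evolve E t X * X).trace.re| := by
  have hdefect : (X * X).trace.re - ∫ t, w t * (evolve E t X * X).trace.re
      = ∑ p, (1 - (fourier w (E p.2 - E p.1)).re) * ‖hsVec X p‖ ^ 2 := by
    rw [integral_mul_trace_evolve_mul_self hw E hX, ← norm_sq_hsVec_of_isHermitian hX,
      EuclideanSpace.norm_sq_eq, ← Finset.sum_sub_distrib]
    exact Finset.sum_congr rfl fun p _ => by ring
  rw [hdefect]
  refine le_trans ?_ (le_abs_self _)
  refine mul_norm_sq_indicatorVec_le_sum (fun p hp => ?_)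
    (fun p _ => sub_nonneg.2 (hw.fourier_re_le_one _)) (hsVec X)
  linarith [hband _ (not_lt.1 hp)]

theorem abs_trace_mul_re_sub_sqrt_le {n : Type*} [Fintype n] {A Q : Matrix n n ℂ}
    (hA : A.IsHermitian) (hQ : Q.IsHermitian) (s : Set (n × n)) {w₀ δ : ℝ} (hw₀ : w₀ < 1)
    (hδ : (1 - w₀) * ‖indicatorVec sᶜ (hsVec Q)‖ ^ 2 ≤ δ) :
    |(A * Q).trace.re| - √(δ * (A * A).trace.re / (1 - w₀))
      ≤ ‖⟪hsVec Q, indicatorVec s (hsVec A)⟫_ℂ‖ := by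
  have htrace : (A * Q).trace = ⟪hsVec Q, hsVec A⟫_ℂ := by
    rw [inner_hsVec, hQ.eq, Matrix.trace_mul_comm]
  have hoff : ‖indicatorVec sᶜ (hsVec Q)‖ * ‖indicatorVec sᶜ (hsVec A)‖
      ≤ √(δ * (A * A).trace.re / (1 - w₀)) := by
    refine Real.le_sqrt_of_sq_le ?_
    rw [le_div_iff₀ (sub_pos.2 hw₀), ← norm_sq_hsVec_of_isHermitian hA]
    calc (‖indicatorVec sᶜ (hsVec Q)‖ * ‖indicatorVec sᶜ (hsVec A)‖) ^ 2 * (1 - w₀)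
        = (1 - w₀) * ‖indicatorVec sᶜ (hsVec Q)‖ ^ 2 * ‖indicatorVec sᶜ (hsVec A)‖ ^ 2 := by
          ring
      _ ≤ δ * ‖hsVec A‖ ^ 2 :=
          mul_le_mul hδ (norm_indicatorVec_sq_le _ _) (sq_nonneg _)
            ((mul_nonneg (sub_pos.2 hw₀).le (sq_nonneg _)).trans hδ)
  have hsplit := norm_inner_le_norm_inner_indicatorVec_add s (hsVec A) (hsVec Q)
  have hre := Complex.abs_re_le_norm (A * Q).trace
  rw [htrace] at hre ⊢
  linarith

theorem finite_time_mazur_suzuki_general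
    {D M : ℕ} (E : Fin D → ℝ)
    (A : Matrix (Fin D) (Fin D) ℂ) (hA : A.IsHermitian)
    (Q : Fin M → Matrix (Fin D) (Fin D) ℂ) (hQherm : ∀ k, (Q k).IsHermitian)
    (horth : ∀ k j, k ≠ j → (Q k * Q j).trace = 0)
    (ΔE W w₂₀ : ℝ) (hW0 : 0 < W)
    (hw₂₀1 : w₂₀ < 1)
    (w₁ w₂ : ℝ → ℝ) (hw₁ : IsCPWeight w₁) (hw₂ : IsCPWeight w₂)
    (hw₁band : ∀ δE : ℝ, |δE| < ΔE → W ≤ (fourier w₁ δE).re)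
    (hw₂band : ∀ δE : ℝ, ΔE ≤ |δE| → (fourier w₂ δE).re ≤ w₂₀) :
    (∫ t : ℝ, w₁ t * (evolve E t A * A).trace.re)
      ≥ W * ∑ k : Fin M,
          (max (|(A * Q k).trace.re| -
              Real.sqrt
                (|(Q k * Q k).trace.re -
                    ∫ t : ℝ, w₂ t * (evolve E t (Q k) * Q k).trace.re| *
                  (A * A).trace.re / (1 - w₂₀))) 0) ^ 2
            / (Q k * Q k).trace.re := by
  have hQ_orth : Pairwise fun k j => ⟪hsVec (Q k), hsVec (Q j)⟫_ℂ = 0 := by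
    intro k j hkj
    rw [inner_hsVec, (hQherm k).eq, horth k j hkj]
  have hbessel := sum_norm_inner_sq_div_norm_sq_le hQ_orth Finset.univ
    (indicatorVec (band E ΔE) (hsVec A))
  refine le_trans ?_ (mul_norm_sq_band_le_integral hw₁ hw₁band hA)
  refine le_trans ?_ (mul_le_mul_of_nonneg_left hbessel hW0.le)
  refine mul_le_mul_of_nonneg_left (Finset.sum_le_sum fun k _ => ?_) hW0.le
  rw [norm_sq_hsVec_of_isHermitian (hQherm k)]
  refine div_le_div_of_nonneg_right (pow_le_pow_left₀ (le_max_right _ _) ?_ 2)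
    (norm_sq_hsVec_of_isHermitian (hQherm k) ▸ sq_nonneg _)
  exact max_le (abs_trace_mul_re_sub_sqrt_le hA (hQherm k) _ hw₂₀1
    (one_sub_mul_norm_sq_offBand_le hw₂.toIsWeight hw₂band (hQherm k))) (norm_nonneg _)

/-- **Finite-time Mazur–Suzuki inequality with approximately conserved charges.**
Let `A` and `Q₁, …, Q_M` (`M ≥ 1`) be Hermitian operators on `ℂ^D` with
`Tr(Q_k Q_j) = 0` for `k ≠ j` and `Tr(Q_k²) > 0`.  Let `ΔE > 0`, `W ∈ (0,1)`,
`w₂₀ ∈ (0,1)`, and let `w₊`, `w₂₊` be completely positive weights with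
`w̃₊(δE) ≥ W` for `|δE| < ΔE` and `w̃₂₊(δE) ≤ w₂₀` for `|δE| ≥ ΔE`.  With
`δQ_k² = |Tr(Q_k²) - ∫ w₂₊(t) Tr(Q_k(t) Q_k) dt|`, the completely positive time average of
the autocorrelator of `A` is bounded below:
`∫ w₊(t) Tr(A(t) A) dt ≥ W Σ_k (max(|Tr(A Q_k)| - √(δQ_k² Tr(A²)/(1-w₂₀)), 0))² / Tr(Q_k²)`. -/
theorem finite_time_mazur_suzuki
    {D M : ℕ} (hD : 0 < D) (hM : 1 ≤ M) (E : Fin D → ℝ)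
    (A : Matrix (Fin D) (Fin D) ℂ) (hA : A.IsHermitian)
    (Q : Fin M → Matrix (Fin D) (Fin D) ℂ) (hQherm : ∀ k, (Q k).IsHermitian)
    (horth : ∀ k j, k ≠ j → (Q k * Q j).trace = 0)
    (hQpos : ∀ k, 0 < (Q k * Q k).trace.re)
    (ΔE W w₂₀ : ℝ) (hΔE : 0 < ΔE) (hW0 : 0 < W) (hW1 : W < 1)
    (hw₂₀0 : 0 < w₂₀) (hw₂₀1 : w₂₀ < 1)
    (w₁ w₂ : ℝ → ℝ) (hw₁ : IsCPWeight w₁) (hw₂ : IsCPWeight w₂)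
    (hw₁band : ∀ δE : ℝ, |δE| < ΔE → W ≤ (fourier w₁ δE).re)
    (hw₂band : ∀ δE : ℝ, ΔE ≤ |δE| → (fourier w₂ δE).re ≤ w₂₀) :
    (∫ t : ℝ, w₁ t * (evolve E t A * A).trace.re)
      ≥ W * ∑ k : Fin M,
          (max (|(A * Q k).trace.re| -
              Real.sqrt
                (|(Q k * Q k).trace.re -
                    ∫ t : ℝ, w₂ t * (evolve E t (Q k) * Q k).trace.re| *
                  (A * A).trace.re / (1 - w₂₀))) 0) ^ 2
            / (Q k * Q k).trace.re :=
  finite_time_mazur_suzuki_general E A hA Q hQherm horth ΔE W w₂₀ hW0 hw₂₀1 w₁ w₂ hw₁ hw₂ hw₁band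
    hw₂band

end QET
end

section
/- Assume Π_A satisfies energy-band thermalization in the shell S (of cardinality d ≥ 1) with bandwidth ΔE > 0 and accuracy ε > 0, and let λ > 0. Then the number of distinct real values E₀ ∈ {E n : n ∈ S} for which Σ_{n,m ∈ S with E n = E m = E₀} |⟨e n, Π_A (e m)⟩ − ⟨Π_A⟩_S · δ_{nm}|² ≥ λ² (i.e. the eigenspace of E₀ violates eigenspace thermalization to accuracy λ) is strictly less than (ε²/λ²) · d. -/
open MeasureTheory Filter
open scoped ComplexOrder

namespace QET

variable {D : ℕ}

noncomputable def eigenVar (S : Finset (Fin D)) (E : Fin D → ℝ) (P : Matrix (Fin D) (Fin D) ℂ)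
    (E₀ : ℝ) : ℝ :=
  ∑ n ∈ S, ∑ m ∈ S, if E n = E₀ ∧ E m = E₀ then ‖devEl S P n m‖ ^ 2 else 0

theorem sum_ite_eq_and_eq_le_ite_abs_sub_lt (T : Finset ℝ) {a b ΔE c : ℝ} (hΔE : 0 < ΔE)
    (hc : 0 ≤ c) :
    ∑ x ∈ T, (if a = x ∧ b = x then c else 0) ≤ if |a - b| < ΔE then c else 0 := by
  simp only [ite_and, Finset.sum_ite_eq]
  split_ifs <;> simp_all

/-- Distinct eigenspaces occupy disjoint diagonal blocks, all inside the energy band. -/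
theorem sum_eigenVar_le_bandVar (S : Finset (Fin D)) (E : Fin D → ℝ) {ΔE : ℝ} (hΔE : 0 < ΔE)
    (P : Matrix (Fin D) (Fin D) ℂ) (T : Finset ℝ) :
    ∑ E₀ ∈ T, eigenVar S E P E₀ ≤ bandVar S E ΔE P := by
  simp only [eigenVar, bandVar]
  rw [Finset.sum_comm]
  refine Finset.sum_le_sum fun n _ => ?_
  rw [Finset.sum_comm]
  exact Finset.sum_le_sum fun m _ =>
    sum_ite_eq_and_eq_le_ite_abs_sub_lt T hΔE (sq_nonneg _)

theorem EnergyBandTherm.bandVar_lt {S : Finset (Fin D)} {E : Fin D → ℝ} {ΔE ε : ℝ}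
    {P : Matrix (Fin D) (Fin D) ℂ} (h : EnergyBandTherm S E ΔE ε P) (hS : 0 < S.card) :
    bandVar S E ΔE P < ε ^ 2 * S.card := by
  rwa [EnergyBandTherm, one_div, inv_mul_lt_iff₀ (by exact_mod_cast hS), mul_comm] at h

theorem energy_band_constrains_nonthermal_eigenspaces_general
    {D : ℕ} (E : Fin D → ℝ)
    (S : Finset (Fin D)) (hd : 1 ≤ S.card)
    (PiA : Matrix (Fin D) (Fin D) ℂ)
    (ΔE ε : ℝ) (hΔE : 0 < ΔE)
    (hEBT : EnergyBandTherm S E ΔE ε PiA)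
    (lam : ℝ) (hlam : 0 < lam) :
    (((S.image E).filter fun E₀ : ℝ =>
        lam ^ 2 ≤ ∑ n ∈ S, ∑ m ∈ S,
          if E n = E₀ ∧ E m = E₀ then ‖devEl S PiA n m‖ ^ 2 else 0).card : ℝ)
      < (ε ^ 2 / lam ^ 2) * S.card := by
  set T := (S.image E).filter fun E₀ => lam ^ 2 ≤ eigenVar S E PiA E₀
  change (T.card : ℝ) < _
  rw [div_mul_eq_mul_div, lt_div_iff₀ (pow_pos hlam 2), ← nsmul_eq_mul]
  calc T.card • lam ^ 2 ≤ ∑ E₀ ∈ T, eigenVar S E PiA E₀ :=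
        Finset.card_nsmul_le_sum T _ _ fun E₀ hE₀ => (Finset.mem_filter.mp hE₀).2
    _ ≤ bandVar S E ΔE PiA := sum_eigenVar_le_bandVar S E hΔE PiA T
    _ < ε ^ 2 * S.card := hEBT.bandVar_lt hd

/-- **Energy-band thermalization constrains the number of non-thermal eigenspaces.**
If `Π_A` satisfies energy-band thermalization in the shell `S` (of cardinality `d ≥ 1`)
with bandwidth `ΔE > 0` and accuracy `ε > 0`, then for every `λ > 0`, the number of
distinct values `E₀ ∈ {E n : n ∈ S}` whose eigenspace violates eigenspace thermalization to
accuracy `λ`, i.e. with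
`Σ_{n,m ∈ S, E n = E m = E₀} |⟨e n, Π_A e m⟩ - ⟨Π_A⟩_S δ_{nm}|² ≥ λ²`,
is strictly less than `(ε²/λ²) · d`. -/
theorem energy_band_constrains_nonthermal_eigenspaces
    {D : ℕ} (hD : 0 < D) (E : Fin D → ℝ)
    (S : Finset (Fin D)) (hd : 1 ≤ S.card)
    (PiA : Matrix (Fin D) (Fin D) ℂ) (hPiA : IsObservable PiA)
    (ΔE ε : ℝ) (hΔE : 0 < ΔE) (hε : 0 < ε)
    (hEBT : EnergyBandTherm S E ΔE ε PiA)
    (lam : ℝ) (hlam : 0 < lam) :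
    (((S.image E).filter fun E₀ : ℝ =>
        lam ^ 2 ≤ ∑ n ∈ S, ∑ m ∈ S,
          if E n = E₀ ∧ E m = E₀ then ‖devEl S PiA n m‖ ^ 2 else 0).card : ℝ)
      < (ε ^ 2 / lam ^ 2) * S.card :=
  energy_band_constrains_nonthermal_eigenspaces_general E S hd PiA ΔE ε hΔE hEBT lam hlam

end QET
end
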